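/- Fix R > 0, a natural number r ≥ 1, complex numbers t₀, t₁, …, t_r with t₀ real, and a sequence (s_k)_{k≥1} of complex numbers such that for some ρ > R the series Σ_{k≥1} ‖s_k‖·ρ^k converges. For θ ∈ ℝ set ζ(θ) = R·e^{iθ}, g(θ) = −Σ_{k=1}^{r} (t_k/k)·ζ(θ)^{−k} + t₀·(log R + iθ) + Σ_{k=1}^{∞} s_k·ζ(θ)^{k}, and f(θ) = Σ_{k=0}^{r} t_k·ζ(θ)^{−k−1} + Σ_{k=1}^{∞} k·s_k·ζ(θ)^{k−1}. Then (1/(2πi)) ∫_{−π}^{π} conj(g(θ)) · f(θ) · (i R e^{iθ}) dθ = −Σ_{k=1}^{r} (‖t_k‖²/k)·R^{−2k} + Σ_{k=1}^{∞} k·‖s_k‖²·R^{2k} + 2·t₀²·log R − t₀·g(π) + iπ·t₀². -/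

import Mathlib

/-!
On the circle `ζ = R e^{iθ}` write `ζ f(ζ) = ∑ₙ bₙ e^{inθ}`, with `bₙ = λₙ Rⁿ` for the Laurent
coefficients `λₙ` of `ζ f`. Since `dg/dθ = f · iζ`, `g` is `t₀ (log R + iθ)` plus the periodic
series `∑_{n ≠ 0} (bₙ / n) e^{inθ}`. Orthogonality of the `e^{inθ}` turns the periodic part of the
integral into `∑ₙ |bₙ|² / n`, the sum of the two series on the right. The remaining part
`t₀ (log R - iθ)` of `conj g` meets only the Fourier coefficients of `ζ f`: the constant picks out
`b₀ = t₀`, and `θ` contributes through `∫ θ e^{inθ} dθ = 2π (-1)ⁿ / (in)`, which evaluates the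
periodic part of `g` at `π`. Together they give `2 t₀² log R - t₀ g(π) + iπ t₀²`.
-/

open Real Complex
open ComplexConjugate MeasureTheory intervalIntegral Finset
open scoped Interval

noncomputable def trigMonomial (n : ℤ) (θ : ℝ) : ℂ := cexp (n * θ * I)

noncomputable def trigSeries (c : ℤ → ℂ) (θ : ℝ) : ℂ := ∑' n : ℤ, c n * trigMonomial n θ

lemma hasSum_integral_of_norm_le {ι E : Type*} [Countable ι] [NormedAddCommGroup E]
    [NormedSpace ℝ E] [CompleteSpace E] {F : ι → ℝ → E} {M : ι → ℝ} {a b : ℝ}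
    (hF : ∀ i, Continuous (F i)) (hM : Summable M) (hle : ∀ i, ∀ θ ∈ Ι a b, ‖F i θ‖ ≤ M i) :
    HasSum (fun i => ∫ θ in a..b, F i θ) (∫ θ in a..b, ∑' i, F i θ) :=
  hasSum_integral_of_dominated_convergence (fun i _ => M i) (fun i => (hF i).aestronglyMeasurable)
    (fun i => .of_forall (hle i)) (.of_forall fun _ _ => hM) intervalIntegrable_const
    (.of_forall fun θ hθ => (hM.of_norm_bounded (hle · θ hθ)).hasSum)

lemma zpow_natCast_add_one {G : Type*} [DivInvMonoid G] (a : G) (k : ℕ) :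
    a ^ ((k : ℤ) + 1) = a ^ (k + 1) := by
  exact_mod_cast zpow_natCast a (k + 1)

section trigMonomial

@[fun_prop]
lemma continuous_trigMonomial (n : ℤ) : Continuous (trigMonomial n) := by
  unfold trigMonomial
  fun_prop

@[simp]
lemma norm_trigMonomial (n : ℤ) (θ : ℝ) : ‖trigMonomial n θ‖ = 1 := by
  unfold trigMonomial
  exact_mod_cast norm_exp_ofReal_mul_I (n * θ)

@[simp]
lemma trigMonomial_zero (θ : ℝ) : trigMonomial 0 θ = 1 := by
  simp [trigMonomial]

lemma trigMonomial_mul (m n : ℤ) (θ : ℝ) :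
    trigMonomial m θ * trigMonomial n θ = trigMonomial (m + n) θ := by
  rw [trigMonomial, trigMonomial, trigMonomial, ← Complex.exp_add]
  push_cast
  ring_nf

lemma conj_trigMonomial (n : ℤ) (θ : ℝ) : conj (trigMonomial n θ) = trigMonomial (-n) θ := by
  rw [trigMonomial, trigMonomial, ← exp_conj]
  simp

lemma trigMonomial_neg_pi (n : ℤ) : trigMonomial n (-π) = trigMonomial n π := by
  rw [trigMonomial, trigMonomial, show (n : ℂ) * ↑(-π) * I = n * π * I - n * (2 * π * I) by
    push_cast; ring, Complex.exp_sub, exp_int_mul_two_pi_mul_I, div_one]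

lemma hasDerivAt_trigMonomial (n : ℤ) (θ : ℝ) :
    HasDerivAt (trigMonomial n) (n * I * trigMonomial n θ) θ := by
  have := (((hasDerivAt_id θ).ofReal_comp.const_mul (n : ℂ)).mul_const I).cexp
  simp only [id, ofReal_one, mul_one] at this
  rw [mul_comm]
  exact this

lemma hasDerivAt_trigMonomial_div {n : ℤ} (hn : n ≠ 0) (θ : ℝ) :
    HasDerivAt (fun θ => trigMonomial n θ / (n * I)) (trigMonomial n θ) θ := by
  have hnI : (n : ℂ) * I ≠ 0 := mul_ne_zero (by exact_mod_cast hn) I_ne_zero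
  simpa [hnI] using (hasDerivAt_trigMonomial n θ).div_const (n * I)

lemma integral_trigMonomial (n : ℤ) :
    ∫ θ in (-π)..π, trigMonomial n θ = if n = 0 then 2 * (π : ℂ) else 0 := by
  split_ifs with hn
  · simp only [hn, trigMonomial_zero, intervalIntegral.integral_const, sub_neg_eq_add, real_smul,
      ofReal_add, mul_one]
    ring
  rw [integral_eq_sub_of_hasDerivAt (fun θ _ => hasDerivAt_trigMonomial_div hn θ)
    ((continuous_trigMonomial n).intervalIntegrable _ _), trigMonomial_neg_pi, sub_self]

/-- For `n = 0` both sides vanish, the right one because `x / 0 = 0` in Lean. -/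
lemma integral_ofReal_mul_trigMonomial (n : ℤ) :
    ∫ θ in (-π)..π, θ * trigMonomial n θ = -2 * π * I * trigMonomial n π / n := by
  rcases eq_or_ne n 0 with rfl | hn
  · simp only [trigMonomial_zero, mul_one, Int.cast_zero, div_zero]
    rw [intervalIntegral.integral_ofReal, integral_id]
    simp
  have hid (θ : ℝ) : HasDerivAt (fun θ : ℝ => (θ : ℂ)) 1 θ := by
    simpa using (hasDerivAt_id θ).ofReal_comp
  rw [intervalIntegral.integral_mul_deriv_eq_deriv_mul (fun θ _ => hid θ)
    (fun θ _ => hasDerivAt_trigMonomial_div hn θ) intervalIntegrable_const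
    ((continuous_trigMonomial n).intervalIntegrable _ _)]
  simp only [one_mul, intervalIntegral.integral_div, integral_trigMonomial, if_neg hn, zero_div,
    sub_zero, trigMonomial_neg_pi]
  push_cast
  field_simp
  simp only [I_sq]
  ring

end trigMonomial

section trigSeries

variable {a c : ℤ → ℂ}

lemma norm_trigSeries_le (hc : Summable (‖c ·‖)) (θ : ℝ) :
    ‖trigSeries c θ‖ ≤ ∑' n, ‖c n‖ :=
  tsum_of_norm_bounded hc.hasSum fun n => by simp

lemma continuous_trigSeries (hc : Summable (‖c ·‖)) : Continuous (trigSeries c) :=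
  continuous_tsum (fun n => by fun_prop) hc fun n θ => by simp

lemma summable_norm_div_intCast (hc : Summable (‖c ·‖)) :
    Summable fun n : ℤ => ‖c n / n‖ := by
  refine hc.of_nonneg_of_le (fun _ => norm_nonneg _) fun n => ?_
  rcases eq_or_ne n 0 with rfl | hn
  · simp
  rw [norm_div, norm_intCast]
  exact div_le_self (norm_nonneg _) (by exact_mod_cast Int.one_le_abs hn)

lemma conj_trigSeries (θ : ℝ) :
    conj (trigSeries a θ) = ∑' n, conj (a n) * trigMonomial (-n) θ := by
  simp only [trigSeries, conj_tsum, map_mul, conj_trigMonomial]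

lemma integral_trigMonomial_neg_mul_trigSeries (hc : Summable (‖c ·‖)) (n : ℤ) :
    ∫ θ in (-π)..π, trigMonomial (-n) θ * trigSeries c θ = 2 * π * c n := by
  have hsum := hasSum_integral_of_norm_le (a := -π) (b := π)
    (F := fun m θ => c m * trigMonomial (-n + m) θ) (fun m => by fun_prop) hc fun m θ _ => by simp
  simp only [trigSeries, ← tsum_mul_left, mul_left_comm (trigMonomial (-n) _), trigMonomial_mul]
  rw [← hsum.tsum_eq]
  simp only [intervalIntegral.integral_const_mul, integral_trigMonomial, neg_add_eq_zero, mul_ite,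
    mul_zero, eq_comm (a := n)]
  rw [tsum_ite_eq]
  ring

lemma integral_trigSeries (hc : Summable (‖c ·‖)) :
    ∫ θ in (-π)..π, trigSeries c θ = 2 * π * c 0 := by
  simpa using integral_trigMonomial_neg_mul_trigSeries hc 0

lemma integral_conj_trigSeries_mul (ha : Summable (‖a ·‖)) (hc : Summable (‖c ·‖)) :
    ∫ θ in (-π)..π, conj (trigSeries a θ) * trigSeries c θ = 2 * π * ∑' n, conj (a n) * c n := by
  have hsum := hasSum_integral_of_norm_le (a := -π) (b := π)
    (F := fun n θ => conj (a n) * trigMonomial (-n) θ * trigSeries c θ)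
    (fun n => by have := continuous_trigSeries hc; fun_prop) (ha.mul_right (∑' m, ‖c m‖))
    fun n θ _ => by
      simpa using mul_le_mul_of_nonneg_left (norm_trigSeries_le hc θ) (norm_nonneg (a n))
  simp only [conj_trigSeries, ← tsum_mul_right]
  rw [← hsum.tsum_eq, ← tsum_mul_left]
  congr 1 with n
  simp only [mul_assoc, intervalIntegral.integral_const_mul,
    integral_trigMonomial_neg_mul_trigSeries hc]
  ring

lemma integral_ofReal_mul_trigSeries (hc : Summable (‖c ·‖)) :
    ∫ θ in (-π)..π, θ * trigSeries c θ = -2 * π * I * trigSeries (fun n => c n / n) π := by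
  have hsum := hasSum_integral_of_norm_le (a := -π) (b := π)
    (F := fun n θ => θ * (c n * trigMonomial n θ)) (fun n => by fun_prop) (hc.mul_left π)
    fun n θ hθ => by
      obtain ⟨hθ₁, hθ₂⟩ : θ ∈ Set.Ioc (-π) π :=
        Set.uIoc_of_le (show -π ≤ π by linarith [pi_pos]) ▸ hθ
      rw [norm_mul, norm_mul, norm_trigMonomial, mul_one, norm_real, Real.norm_eq_abs]
      exact mul_le_mul_of_nonneg_right (abs_le.2 ⟨hθ₁.le, hθ₂⟩) (norm_nonneg _)
  simp only [trigSeries, ← tsum_mul_left]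
  rw [← hsum.tsum_eq]
  congr 1 with n
  simp only [mul_left_comm _ (c n), intervalIntegral.integral_const_mul,
    integral_ofReal_mul_trigMonomial]
  ring

/-- The conjugated function is a primitive of `θ ↦ I * trigSeries b θ`, since the `n = 0`
coefficient `b 0 / 0` of its periodic part is `0` in Lean. -/
lemma integral_conj_primitive_mul_trigSeries {b : ℤ → ℂ} (hb : Summable (‖b ·‖)) (L : ℝ) :
    ∫ θ in (-π)..π, conj (b 0 * (L + I * θ) + trigSeries (fun n => b n / n) θ) * trigSeries b θ
      = 2 * π * (conj (b 0) * (L * b 0 - trigSeries (fun n => b n / n) π)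
          + ∑' n, conj (b n / n) * b n) := by
  have hb' := summable_norm_div_intCast hb
  have hF := continuous_trigSeries hb
  have hG := continuous_trigSeries hb'
  have hint {f : ℝ → ℂ} (hf : Continuous f) : IntervalIntegrable f volume (-π) π :=
    hf.intervalIntegrable _ _
  have hsplit (θ : ℝ) :
      conj (b 0 * (L + I * θ) + trigSeries (fun n => b n / n) θ) * trigSeries b θ
        = conj (b 0) * L * trigSeries b θ + -I * conj (b 0) * (θ * trigSeries b θ)
          + conj (trigSeries (fun n => b n / n) θ) * trigSeries b θ := by
    simp only [map_add, map_mul, conj_ofReal, conj_I]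
    ring
  simp only [hsplit]
  rw [intervalIntegral.integral_add (hint (by fun_prop)) (hint (by fun_prop)),
    intervalIntegral.integral_add (hint (by fun_prop)) (hint (by fun_prop)),
    intervalIntegral.integral_const_mul, intervalIntegral.integral_const_mul,
    integral_trigSeries hb, integral_ofReal_mul_trigSeries hb, integral_conj_trigSeries_mul hb' hb]
  ring_nf
  simp only [I_sq]
  ring

lemma ofReal_mul_exp_I_mul_zpow (R θ : ℝ) (n : ℤ) :
    ((R : ℂ) * cexp (I * θ)) ^ n = R ^ n * trigMonomial n θ := by
  rw [mul_zpow, trigMonomial, ← exp_int_mul]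
  ring_nf

lemma trigSeries_mul_zpow (c : ℤ → ℂ) (R θ : ℝ) :
    trigSeries (fun n => c n * R ^ n) θ = ∑' n, c n * (R * cexp (I * θ)) ^ n := by
  simp only [trigSeries, ofReal_mul_exp_I_mul_zpow, mul_assoc]

end trigSeries

lemma summable_natCast_mul_norm_mul_pow {E : Type*} [SeminormedAddCommGroup E] {a : ℕ → E}
    {R ρ : ℝ} (hR : 0 ≤ R) (hRρ : R < ρ) (ha : Summable fun n => ‖a n‖ * ρ ^ n) :
    Summable fun n : ℕ => n * (‖a n‖ * R ^ n) := by
  have hρ : 0 < ρ := hR.trans_lt hRρ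
  have hq : 0 ≤ R / ρ := div_nonneg hR hρ.le
  obtain ⟨C, hC⟩ := ha.tendsto_atTop_zero.isBoundedUnder_le.bddAbove_range
  have hgeo : Summable fun n : ℕ => (n : ℝ) * (R / ρ) ^ n := by
    simpa using summable_pow_mul_geometric_of_norm_lt_one 1 (r := R / ρ)
      (by rwa [Real.norm_of_nonneg hq, div_lt_one hρ])
  refine (hgeo.mul_right C).of_nonneg_of_le
    (fun n => mul_nonneg n.cast_nonneg (mul_nonneg (norm_nonneg _) (pow_nonneg hR n))) fun n => ?_
  calc (n : ℝ) * (‖a n‖ * R ^ n) = n * (R / ρ) ^ n * (‖a n‖ * ρ ^ n) := by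
        rw [div_pow]
        field_simp
    _ ≤ n * (R / ρ) ^ n * C :=
        mul_le_mul_of_nonneg_left (hC ⟨n, rfl⟩) (mul_nonneg n.cast_nonneg (pow_nonneg hq n))

lemma summable_succ_mul_sq {u : ℕ → ℝ} (hu : ∀ k, 0 ≤ u k)
    (h : Summable fun k : ℕ => (k + 1) * u k) : Summable fun k : ℕ => (k + 1) * u k ^ 2 := by
  have hu' : Summable u := h.of_nonneg_of_le hu fun k => le_mul_of_one_le_left (hu k) (by simp)
  refine (h.mul_right (∑' k, u k)).of_nonneg_of_le (fun k => by positivity) fun k => ?_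
  rw [sq, ← mul_assoc]
  exact mul_le_mul_of_nonneg_left (hu'.le_tsum k fun j _ => hu j)
    (mul_nonneg (by positivity) (hu k))

lemma hasSum_ite_lt {M : Type*} [AddCommMonoid M] [TopologicalSpace M] (r : ℕ) (x : ℕ → M) :
    HasSum (fun k => if k < r then x k else 0) (∑ k ∈ range r, x k) := by
  have := hasSum_sum_of_ne_finset_zero (s := range r) (f := fun k => if k < r then x k else 0)
    (L := SummationFilter.unconditional ℕ) (by simp_all)
  rwa [sum_congr rfl fun k hk => if_pos (mem_range.1 hk)] at this

lemma sum_range_add_one_eq_sum_Icc {M : Type*} [AddCommMonoid M] (r : ℕ) (x : ℕ → M) :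
    ∑ k ∈ range r, x (k + 1) = ∑ k ∈ Icc 1 r, x k := by
  rw [← Ico_add_one_right_eq_Icc, sum_Ico_eq_sum_range]
  simp [add_comm]

/-- The Laurent coefficients of `ζ f(ζ) = ∑_{k ≤ r} t_k ζ^{-k} + ∑_{k ≥ 1} k s_k ζ^k`. -/
def laurentCoeff (r : ℕ) (t s : ℕ → ℂ) : ℤ → ℂ
  | .ofNat 0 => t 0
  | .ofNat (k + 1) => (k + 1) * s (k + 1)
  | .negSucc k => if k < r then t (k + 1) else 0

section laurentCoeff

variable {r : ℕ} {t s : ℕ → ℂ}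

@[simp]
lemma laurentCoeff_zero : laurentCoeff r t s 0 = t 0 := rfl

@[simp]
lemma laurentCoeff_natCast_add_one (k : ℕ) :
    laurentCoeff r t s (k + 1) = (k + 1) * s (k + 1) := rfl

@[simp]
lemma laurentCoeff_neg_natCast_add_one (k : ℕ) :
    laurentCoeff r t s (-(k + 1)) = if k < r then t (k + 1) else 0 := rfl

lemma summable_norm_laurentCoeff_mul_zpow {R : ℝ} (hR : 0 < R)
    (hs : Summable fun k : ℕ => (k + 1) * (‖s (k + 1)‖ * R ^ (k + 1))) :
    Summable fun n : ℤ => ‖laurentCoeff r t s n * (R : ℂ) ^ n‖ := by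
  refine .of_add_one_of_neg_add_one (f := fun n : ℤ => ‖laurentCoeff r t s n * (R : ℂ) ^ n‖)
    (hs.congr fun k => ?_)
    ((hasSum_ite_lt r fun k => ‖t (k + 1) * (R : ℂ) ^ (-((k : ℤ) + 1))‖).summable.congr fun k => ?_)
  · have hk : ‖(k : ℂ) + 1‖ = k + 1 := by exact_mod_cast Complex.norm_natCast (k + 1)
    rw [laurentCoeff_natCast_add_one, zpow_natCast_add_one, norm_mul, norm_mul, norm_pow, hk,
      norm_real, Real.norm_of_nonneg hR.le, mul_assoc]
  · rw [laurentCoeff_neg_natCast_add_one]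
    split_ifs <;> simp

lemma hasSum_laurentCoeff_mul_zpow {z : ℂ} (hz : z ≠ 0)
    (hs : Summable fun k : ℕ => (k + 1) * (‖s (k + 1)‖ * ‖z‖ ^ (k + 1))) :
    HasSum (fun n : ℤ => laurentCoeff r t s n * z ^ n)
      ((∑ k ∈ range (r + 1), t k * z ^ (-(k : ℤ) - 1)
        + ∑' k : ℕ, ((k : ℂ) + 1) * s (k + 1) * z ^ k) * z) := by
  have hpos : Summable fun k : ℕ => ((k : ℂ) + 1) * s (k + 1) * z ^ (k + 1) := by
    refine .of_norm (hs.congr fun k => ?_)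
    have hk : ‖(k : ℂ) + 1‖ = k + 1 := by exact_mod_cast Complex.norm_natCast (k + 1)
    rw [norm_mul, norm_mul, norm_pow, hk, mul_assoc]
  have hpos' : HasSum (fun k : ℕ => laurentCoeff r t s (k + 1) * z ^ ((k : ℤ) + 1))
      (∑' k : ℕ, ((k : ℂ) + 1) * s (k + 1) * z ^ (k + 1)) := by
    convert hpos.hasSum using 2 with k
    rw [laurentCoeff_natCast_add_one, zpow_natCast_add_one]
  have hneg : HasSum (fun k : ℕ => laurentCoeff r t s (-(k + 1)) * z ^ (-((k : ℤ) + 1)))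
      (∑ k ∈ range r, t (k + 1) * z ^ (-((k : ℤ) + 1))) := by
    simpa only [laurentCoeff_neg_natCast_add_one, ite_mul, zero_mul] using
      hasSum_ite_lt r (fun k => t (k + 1) * z ^ (-((k : ℤ) + 1)))
  convert HasSum.of_add_one_of_neg_add_one
    (f := fun n : ℤ => laurentCoeff r t s n * z ^ n) hpos' hneg using 1
  have hk (k : ℕ) : t k * z ^ (-(k : ℤ) - 1) * z = t k * z ^ (-(k : ℤ)) := by
    rw [zpow_sub_one₀ hz, mul_assoc, inv_mul_cancel_right₀ hz]
  rw [add_mul, sum_mul, ← tsum_mul_right]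
  simp only [hk, mul_assoc _ (_ ^ _), ← pow_succ, sum_range_succ', laurentCoeff_zero]
  push_cast
  simp only [neg_zero, zpow_zero]
  ring

lemma hasSum_laurentCoeff_div_mul_zpow {z : ℂ}
    (hs : Summable fun k : ℕ => (k + 1) * (‖s (k + 1)‖ * ‖z‖ ^ (k + 1))) :
    HasSum (fun n : ℤ => laurentCoeff r t s n / n * z ^ n)
      (-(∑ k ∈ Icc 1 r, (t k / (k : ℂ)) * z ^ (-(k : ℤ))) + ∑' k : ℕ, s (k + 1) * z ^ (k + 1)) := by
  have hpos : Summable fun k : ℕ => s (k + 1) * z ^ (k + 1) := by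
    refine hs.of_norm_bounded fun k => ?_
    rw [norm_mul, norm_pow]
    exact le_mul_of_one_le_left (by positivity) (by simp)
  have hpos' : HasSum
      (fun k : ℕ => laurentCoeff r t s (k + 1) / ((k : ℤ) + 1 : ℤ) * z ^ ((k : ℤ) + 1))
      (∑' k : ℕ, s (k + 1) * z ^ (k + 1)) := by
    convert hpos.hasSum using 2 with k
    have hk : (k : ℂ) + 1 ≠ 0 := by exact_mod_cast k.succ_ne_zero
    rw [laurentCoeff_natCast_add_one, zpow_natCast_add_one]
    push_cast
    field_simp
  have hneg : HasSum (fun k : ℕ =>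
        laurentCoeff r t s (-(k + 1)) / ((-(k + 1) : ℤ) : ℂ) * z ^ (-((k : ℤ) + 1)))
      (-∑ k ∈ range r, t (k + 1) / (k + 1 : ℂ) * z ^ (-((k : ℤ) + 1))) := by
    rw [← sum_neg_distrib]
    convert hasSum_ite_lt r (fun k => -(t (k + 1) / (k + 1 : ℂ) * z ^ (-((k : ℤ) + 1))))
      using 2 with k
    rw [laurentCoeff_neg_natCast_add_one]
    split_ifs <;> simp only [Int.cast_neg, Int.cast_add, Int.cast_natCast, Int.cast_one, div_neg,
      neg_mul, zero_div, zero_mul, neg_zero]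
  convert HasSum.of_add_one_of_neg_add_one
    (f := fun n : ℤ => laurentCoeff r t s n / n * z ^ n) hpos' hneg using 1
  rw [← sum_range_add_one_eq_sum_Icc]
  push_cast
  simp only [neg_add_rev, Int.reduceNeg, laurentCoeff_zero, div_zero, zpow_ofNat, pow_zero, mul_one,
    add_zero]
  ring

lemma hasSum_conj_div_mul_laurentCoeff {R : ℝ} (hR : 0 ≤ R)
    (hs : Summable fun k : ℕ => (k + 1) * (‖s (k + 1)‖ * R ^ (k + 1))) :
    HasSum (fun n : ℤ => conj (laurentCoeff r t s n * R ^ n / n) * (laurentCoeff r t s n * R ^ n))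
      (-(∑ k ∈ Icc 1 r, ((‖t k‖ ^ 2 / (k : ℝ) : ℝ) : ℂ) * (R : ℂ) ^ (-(2 * k : ℤ)))
        + ∑' k : ℕ, ((k : ℂ) + 1) * ((‖s (k + 1)‖ ^ 2 : ℝ) : ℂ) * (R : ℂ) ^ (2 * (k + 1))) := by
  have hpos : Summable fun k : ℕ =>
      ((k : ℂ) + 1) * ((‖s (k + 1)‖ ^ 2 : ℝ) : ℂ) * (R : ℂ) ^ (2 * (k + 1)) := by
    refine (Complex.summable_ofReal.2 (summable_succ_mul_sq (fun k => by positivity) hs)).congr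
      fun k => ?_
    push_cast
    ring
  have hpos' : HasSum (fun k : ℕ =>
        conj (laurentCoeff r t s (k + 1) * R ^ ((k : ℤ) + 1) / ((k : ℤ) + 1 : ℤ))
          * (laurentCoeff r t s (k + 1) * R ^ ((k : ℤ) + 1)))
      (∑' k : ℕ, ((k : ℂ) + 1) * ((‖s (k + 1)‖ ^ 2 : ℝ) : ℂ) * (R : ℂ) ^ (2 * (k + 1))) := by
    convert hpos.hasSum using 2 with k
    have hk : (k : ℂ) + 1 ≠ 0 := by exact_mod_cast k.succ_ne_zero
    rw [laurentCoeff_natCast_add_one, zpow_natCast_add_one]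
    push_cast
    simp only [map_div₀, map_mul, map_pow, conj_ofReal, map_add, map_natCast, map_one]
    field_simp
    rw [← conj_mul']
    ring
  have hneg : HasSum (fun k : ℕ =>
        conj (laurentCoeff r t s (-(k + 1)) * R ^ (-((k : ℤ) + 1)) / ((-(k + 1) : ℤ) : ℂ))
          * (laurentCoeff r t s (-(k + 1)) * R ^ (-((k : ℤ) + 1))))
      (-∑ k ∈ range r,
        ((‖t (k + 1)‖ ^ 2 / ((k + 1 : ℕ) : ℝ) : ℝ) : ℂ) * (R : ℂ) ^ (-(2 * (k + 1 : ℕ) : ℤ))) := by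
    rw [← sum_neg_distrib]
    convert hasSum_ite_lt r (fun k => -(((‖t (k + 1)‖ ^ 2 / ((k + 1 : ℕ) : ℝ) : ℝ) : ℂ)
      * (R : ℂ) ^ (-(2 * (k + 1 : ℕ) : ℤ)))) using 2 with k
    rw [laurentCoeff_neg_natCast_add_one]
    split_ifs
    · simp only [map_div₀, map_mul, map_zpow₀, conj_ofReal, map_intCast]
      push_cast
      field_simp
      have hsq : ((R : ℂ) ^ (-((k : ℤ) + 1))) ^ 2 = (R : ℂ) ^ (-(2 * ((k : ℤ) + 1))) := by
        rw [← zpow_natCast, ← zpow_mul]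
        ring_nf
      rw [← conj_mul', hsq]
      ring
    · simp
  convert HasSum.of_add_one_of_neg_add_one (f := fun n : ℤ =>
    conj (laurentCoeff r t s n * R ^ n / n) * (laurentCoeff r t s n * R ^ n)) hpos' hneg using 1
  rw [← sum_range_add_one_eq_sum_Icc]
  simp only [Nat.cast_add, Nat.cast_one, ofReal_div, ofReal_pow, ofReal_add, ofReal_natCast,
    ofReal_one, zpow_neg, laurentCoeff_zero, zpow_ofNat, pow_zero, mul_one, Int.cast_zero, div_zero,
    map_zero, zero_mul, add_zero]
  ring

lemma norm_ofReal_mul_exp_I_mul {R : ℝ} (hR : 0 ≤ R) (θ : ℝ) : ‖(R : ℂ) * cexp (I * θ)‖ = R := by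
  rw [norm_mul, norm_real, Real.norm_of_nonneg hR, mul_comm I, norm_exp_ofReal_mul_I, mul_one]

lemma trigSeries_laurentCoeff_mul_zpow {R : ℝ} (hR : 0 < R)
    (hs : Summable fun k : ℕ => (k + 1) * (‖s (k + 1)‖ * R ^ (k + 1))) (θ : ℝ) :
    trigSeries (fun n => laurentCoeff r t s n * R ^ n) θ
      = (∑ k ∈ range (r + 1), t k * (R * cexp (I * θ)) ^ (-(k : ℤ) - 1)
        + ∑' k : ℕ, ((k : ℂ) + 1) * s (k + 1) * (R * cexp (I * θ)) ^ k) * (R * cexp (I * θ)) := by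
  have hz : (R : ℂ) * cexp (I * θ) ≠ 0 :=
    mul_ne_zero (ofReal_ne_zero.2 hR.ne') (Complex.exp_ne_zero _)
  rw [trigSeries_mul_zpow]
  exact (hasSum_laurentCoeff_mul_zpow hz (by rwa [norm_ofReal_mul_exp_I_mul hR.le])).tsum_eq

lemma trigSeries_laurentCoeff_mul_zpow_div {R : ℝ} (hR : 0 ≤ R)
    (hs : Summable fun k : ℕ => (k + 1) * (‖s (k + 1)‖ * R ^ (k + 1))) (θ : ℝ) :
    trigSeries (fun n => laurentCoeff r t s n * R ^ n / n) θ
      = -(∑ k ∈ Icc 1 r, (t k / (k : ℂ)) * (R * cexp (I * θ)) ^ (-(k : ℤ)))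
        + ∑' k : ℕ, s (k + 1) * (R * cexp (I * θ)) ^ (k + 1) := by
  simp only [mul_div_right_comm _ ((R : ℂ) ^ (_ : ℤ)), trigSeries_mul_zpow]
  exact (hasSum_laurentCoeff_div_mul_zpow (by rwa [norm_ofReal_mul_exp_I_mul hR])).tsum_eq

end laurentCoeff

theorem integral_over_small_circle_general
    (R : ℝ) (hR : 0 < R) (r : ℕ)
    (t : ℕ → ℂ) (ht0 : (t 0).im = 0)
    (s : ℕ → ℂ)
    (hsum : ∃ ρ : ℝ, R < ρ ∧ Summable (fun k : ℕ => ‖s (k + 1)‖ * ρ ^ (k + 1)))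
    (ζ : ℝ → ℂ) (hζ : ∀ θ : ℝ, ζ θ = (R : ℂ) * Complex.exp (Complex.I * θ))
    (g : ℝ → ℂ)
    (hg : ∀ θ : ℝ, g θ =
      -(∑ k ∈ Finset.Icc 1 r, (t k / (k : ℂ)) * (ζ θ) ^ (-(k : ℤ)))
      + t 0 * ((Real.log R : ℂ) + Complex.I * θ)
      + ∑' k : ℕ, s (k + 1) * (ζ θ) ^ (k + 1))
    (f : ℝ → ℂ)
    (hf : ∀ θ : ℝ, f θ =
      ∑ k ∈ Finset.range (r + 1), t k * (ζ θ) ^ (-(k : ℤ) - 1)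
      + ∑' k : ℕ, ((k : ℂ) + 1) * s (k + 1) * (ζ θ) ^ k) :
    (1 / (2 * (π : ℂ) * Complex.I)) *
        ∫ θ in (-π)..π,
          (starRingEnd ℂ) (g θ) * f θ * (Complex.I * (R : ℂ) * Complex.exp (Complex.I * θ)) =
      -(∑ k ∈ Finset.Icc 1 r, ((‖t k‖ ^ 2 / (k : ℝ) : ℝ) : ℂ) * (R : ℂ) ^ (-(2 * k : ℤ)))
      + (∑' k : ℕ, ((k : ℂ) + 1) * ((‖s (k + 1)‖ ^ 2 : ℝ) : ℂ) * (R : ℂ) ^ (2 * (k + 1)))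
      + 2 * (t 0) ^ 2 * (Real.log R : ℂ)
      - t 0 * g π
      + (π : ℂ) * Complex.I * (t 0) ^ 2 := by
  obtain ⟨ρ, hRρ, hρ⟩ := hsum
  have hs : Summable fun k : ℕ => (k + 1) * (‖s (k + 1)‖ * R ^ (k + 1)) := by
    have := summable_natCast_mul_norm_mul_pow hR.le hRρ ((summable_nat_add_iff 1).1 hρ)
    exact_mod_cast (summable_nat_add_iff 1).2 this
  obtain ⟨b, hb⟩ : ∃ b : ℤ → ℂ, b = fun n => laurentCoeff r t s n * (R : ℂ) ^ n := ⟨_, rfl⟩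
  have hb0 : b 0 = t 0 := by simp [hb]
  have hζf (θ : ℝ) : f θ * (I * R * cexp (I * θ)) = I * trigSeries b θ := by
    rw [hb, trigSeries_laurentCoeff_mul_zpow hR hs, ← hζ, ← hf, hζ]
    ring
  have hgb (θ : ℝ) : g θ = b 0 * (Real.log R + I * θ) + trigSeries (fun n => b n / n) θ := by
    rw [hg, hb0, hb, trigSeries_laurentCoeff_mul_zpow_div hR.le hs, ← hζ]
    ring
  have hintegrand (θ : ℝ) : conj (g θ) * f θ * (I * R * cexp (I * θ)) = I *
      (conj (b 0 * (Real.log R + I * θ) + trigSeries (fun n => b n / n) θ) * trigSeries b θ) := by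
    rw [mul_assoc, hζf, hgb]
    ring
  simp_rw [hintegrand]
  rw [intervalIntegral.integral_const_mul,
    integral_conj_primitive_mul_trigSeries (hb ▸ summable_norm_laurentCoeff_mul_zpow hR hs),
    hgb π, hb0, Complex.conj_eq_iff_im.2 ht0]
  subst hb
  rw [(hasSum_conj_div_mul_laurentCoeff hR.le hs).tsum_eq]
  field_simp
  ring

/-- Integral over a small circle of radius R around a puncture: with local times t_k,
conjugate times s_k, local antiderivative g and 1-form f·(iRe^{iθ})dθ of y dx, one has
(1/2πi)∮ conj(g)·y dx = −Σ_{k=1}^r ‖t_k‖²R^{−2k}/k + Σ_{k≥1} k‖s_k‖²R^{2k}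
+ 2t₀² log R − t₀ g(π) + iπt₀². -/
theorem integral_over_small_circle
    (R : ℝ) (hR : 0 < R) (r : ℕ) (hr : 1 ≤ r)
    (t : ℕ → ℂ) (ht0 : (t 0).im = 0)
    (s : ℕ → ℂ)
    (hsum : ∃ ρ : ℝ, R < ρ ∧ Summable (fun k : ℕ => ‖s (k + 1)‖ * ρ ^ (k + 1)))
    (ζ : ℝ → ℂ) (hζ : ∀ θ : ℝ, ζ θ = (R : ℂ) * Complex.exp (Complex.I * θ))
    (g : ℝ → ℂ)
    (hg : ∀ θ : ℝ, g θ =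
      -(∑ k ∈ Finset.Icc 1 r, (t k / (k : ℂ)) * (ζ θ) ^ (-(k : ℤ)))
      + t 0 * ((Real.log R : ℂ) + Complex.I * θ)
      + ∑' k : ℕ, s (k + 1) * (ζ θ) ^ (k + 1))
    (f : ℝ → ℂ)
    (hf : ∀ θ : ℝ, f θ =
      ∑ k ∈ Finset.range (r + 1), t k * (ζ θ) ^ (-(k : ℤ) - 1)
      + ∑' k : ℕ, ((k : ℂ) + 1) * s (k + 1) * (ζ θ) ^ k) :
    (1 / (2 * (π : ℂ) * Complex.I)) *
        ∫ θ in (-π)..π,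
          (starRingEnd ℂ) (g θ) * f θ * (Complex.I * (R : ℂ) * Complex.exp (Complex.I * θ)) =
      -(∑ k ∈ Finset.Icc 1 r, ((‖t k‖ ^ 2 / (k : ℝ) : ℝ) : ℂ) * (R : ℂ) ^ (-(2 * k : ℤ)))
      + (∑' k : ℕ, ((k : ℂ) + 1) * ((‖s (k + 1)‖ ^ 2 : ℝ) : ℂ) * (R : ℂ) ^ (2 * (k + 1)))
      + 2 * (t 0) ^ 2 * (Real.log R : ℂ)
      - t 0 * g π
      + (π : ℂ) * Complex.I * (t 0) ^ 2 :=
  integral_over_small_circle_general R hR r t ht0 s hsum ζ hζ g hg f hf
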